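/- Let S = B₁ × ⋯ × B_m × Z₁ × ⋯ × Zₙ with m, n ≥ 1, where each Bᵢ is the Boolean semiring, and each Zⱼ is a finite commutative antinegative semiring with Z(Zⱼ) closed under addition, |Zⱼ| ≥ 3, and |Zⱼ \ Z(Zⱼ)| = 1. Then dim(Γ₁(S)) = |S| + m − 2^{m+n} = |Z(S)| − 2^{m+n} + m + 1. -/

import Mathlib

/-- `x` is a zero-divisor of the commutative semiring `S`. -/
def IsZD {S : Type*} [CommSemiring S] (x : S) : Prop :=
  ∃ y : S, y ≠ 0 ∧ x * y = 0

/-- The total graph of a commutative semiring: distinct `x, y` are adjacent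
iff `x + y` is a zero-divisor. -/
def totalGraph (S : Type*) [CommSemiring S] : SimpleGraph S where
  Adj x y := x ≠ y ∧ IsZD (x + y)
  symm := by
    constructor
    intro x y h
    exact ⟨h.1.symm, by rw [add_comm]; exact h.2⟩
  loopless := by constructor; intro x h; exact h.1 rfl

/-- The induced subgraph of the total graph on the set of zero-divisors. -/
def gamma1 (S : Type*) [CommSemiring S] : SimpleGraph {x : S // IsZD x} :=
  SimpleGraph.comap Subtype.val (totalGraph S)

/-- A resolving set: distinct vertices have distinct distance vectors to `W`. -/
def IsResolving {V : Type*} (G : SimpleGraph V) (W : Set V) : Prop :=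
  ∀ x y : V, (∀ w ∈ W, G.dist x w = G.dist y w) → x = y

/-- The metric dimension: the least cardinality of a resolving set. -/
noncomputable def metricDim {V : Type*} (G : SimpleGraph V) : ℕ :=
  sInf {k | ∃ W : Set V, W.Finite ∧ W.ncard = k ∧ IsResolving G W}

/-- The Boolean semiring `𝔹 = {0,1}` with `1 + 1 = 1`. -/
inductive BB : Type
  | zero : BB
  | one : BB
deriving DecidableEq

instance : Zero BB := ⟨.zero⟩
instance : One BB := ⟨.one⟩
instance : Add BB := ⟨fun x y => match x, y with | .zero, y => y | .one, _ => .one⟩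
instance : Mul BB := ⟨fun x y => match x, y with | .zero, _ => .zero | .one, y => y⟩
instance : Fintype BB := ⟨{.zero, .one}, by intro x; cases x <;> decide⟩

instance : CommSemiring BB where
  add_assoc := by decide
  zero_add := by decide
  add_zero := by decide
  add_comm := by decide
  mul_assoc := by decide
  one_mul := by decide
  mul_one := by decide
  left_distrib := by decide
  right_distrib := by decide
  zero_mul := by decide
  mul_zero := by decide
  mul_comm := by decide
  nsmul := nsmulRec
  npow := npowRec


/-!
Write `supp x` for the set of coordinates at which `x ∈ S` differs from `1`. In every factor the
only non-zero-divisor is `1`, and `a + b = 1` iff `a = 1` or `b = 1`; hence the vertices of `Γ₁(S)`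
are the `x` with `supp x ≠ ∅`, and `x ~ y` iff `supp x` and `supp y` meet. So `Γ₁(S)` is an
intersection graph with the universal vertex `0`: distances are `1` or `2`, vertices with the same
support are twins, and a resolving set `W` misses at most one vertex of each support.

Omitting one vertex of every nonempty support other than the singletons `{i}` of the Boolean
coordinates leaves a resolving set: the vertex of support `{i}` (unique, as `𝔹 \ {1} = {0}`)
separates supports differing at `i`, and for a coordinate `j` of a `Zⱼ` the support `{j}` has at
least two vertices, one of which stays in `W`.

Conversely, call a support full if all its vertices lie in `W`. Only the vertex of support `{i}`
separates a vertex of support `{i}ᶜ` from one of support `univ` or of support `{i'}ᶜ`. Hence if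
neither `{i}ᶜ` nor `{i}` is full, `univ` is, and this happens for at most one `i`. This yields `m`
full supports besides `∅`, so `|Z(S) \ W| ≤ 2^(m+n) - 1 - m`.
-/

open Function Set

lemma Set.ncard_add_ncard_compl_eq_two_pow {κ : Type*} [Fintype κ] (t : Set (Set κ)) :
    t.ncard + tᶜ.ncard = 2 ^ Fintype.card κ := by
  rw [ncard_add_ncard_compl, Nat.card_eq_fintype_card, Fintype.card_set]

lemma metricDim_add_ncard_compl {V : Type*} [Finite V] {G : SimpleGraph V} {W : Set V}
    (hW : IsResolving G W) (hmax : ∀ W', IsResolving G W' → W'ᶜ.ncard ≤ Wᶜ.ncard) :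
    metricDim G + Wᶜ.ncard = Nat.card V := by
  have hmem : W.ncard ∈ {k | ∃ W : Set V, W.Finite ∧ W.ncard = k ∧ IsResolving G W} :=
    ⟨W, W.toFinite, rfl, hW⟩
  obtain ⟨W₀, -, hW₀, hW₀res⟩ := Nat.sInf_mem ⟨_, hmem⟩
  have hle : metricDim G ≤ W.ncard := Nat.sInf_le hmem
  have h₀ := hmax W₀ hW₀res
  have hsplit := ncard_add_ncard_compl W
  have hsplit₀ := ncard_add_ncard_compl W₀
  rw [metricDim] at hle ⊢
  omega

namespace SimpleGraph

/-- The intersection graph of a family of nonempty sets one of which is the whole index type;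
such a graph has diameter at most two. -/
structure IsIntersectionGraph {V κ : Type*} (G : SimpleGraph V) (s : V → Set κ) : Prop where
  adj_iff : ∀ x y, G.Adj x y ↔ x ≠ y ∧ ¬ Disjoint (s x) (s y)
  nonempty : ∀ x, (s x).Nonempty
  exists_eq_univ : ∃ x, s x = univ

namespace IsIntersectionGraph

section Resolving

variable {V κ : Type*} {G : SimpleGraph V} {s : V → Set κ} (hG : G.IsIntersectionGraph s)
  {W : Set V}
include hG

open Classical in
lemma dist_eq {x y : V} (hxy : x ≠ y) : G.dist x y = if Disjoint (s x) (s y) then 2 else 1 := by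
  split_ifs with hdisj
  · obtain ⟨c, hc⟩ := hG.exists_eq_univ
    have hadj : ∀ z, z ≠ c → G.Adj z c := fun z hz =>
      (hG.adj_iff z c).2 ⟨hz, by simpa [hc] using (hG.nonempty z).ne_empty⟩
    have hxc : x ≠ c := by
      rintro rfl
      exact (hG.nonempty y).ne_empty (by simpa [hc] using hdisj)
    have hyc : y ≠ c := by
      rintro rfl
      exact (hG.nonempty x).ne_empty (by simpa [hc] using hdisj)
    have hle : G.dist x y ≤ 2 := dist_le ((hadj x hxc).toWalk.append (hadj y hyc).symm.toWalk)
    have hpos : 0 < G.dist x y :=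
      ((hadj x hxc).reachable.trans (hadj y hyc).symm.reachable).pos_dist_of_ne hxy
    have hne : G.dist x y ≠ 1 := fun h =>
      ((hG.adj_iff x y).1 (dist_eq_one_iff_adj.1 h)).2 hdisj
    omega
  · exact dist_eq_one_iff_adj.2 ((hG.adj_iff x y).2 ⟨hxy, hdisj⟩)

lemma dist_eq_dist_iff {x y w : V} (hwx : w ≠ x) (hwy : w ≠ y) :
    G.dist x w = G.dist y w ↔ (Disjoint (s w) (s x) ↔ Disjoint (s w) (s y)) := by
  classical
  rw [dist_comm, hG.dist_eq hwx, dist_comm, hG.dist_eq hwy]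
  split_ifs <;> simp_all

lemma isResolving_iff : IsResolving G W ↔
    ∀ x ∉ W, ∀ y ∉ W, x ≠ y → ∃ w ∈ W, ¬ (Disjoint (s w) (s x) ↔ Disjoint (s w) (s y)) := by
  constructor
  · intro hW x hx y hy hxy
    by_contra! h
    refine hxy (hW x y fun w hw => ?_)
    exact (hG.dist_eq_dist_iff (ne_of_mem_of_not_mem hw hx) (ne_of_mem_of_not_mem hw hy)).2
      (h w hw)
  · intro h x y hdist
    classical
    by_contra hxy
    have dist_ne_zero : ∀ {a b : V}, a ≠ b → G.dist a b ≠ 0 := fun hab => by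
      rw [hG.dist_eq hab]; split_ifs <;> simp
    by_cases hx : x ∈ W
    · exact dist_ne_zero (Ne.symm hxy) (by simpa using (hdist x hx).symm)
    by_cases hy : y ∈ W
    · exact dist_ne_zero hxy (by simpa using hdist y hy)
    obtain ⟨w, hw, hsep⟩ := h x hx y hy hxy
    exact hsep ((hG.dist_eq_dist_iff (ne_of_mem_of_not_mem hw hx)
      (ne_of_mem_of_not_mem hw hy)).1 (hdist w hw))

lemma injOn_compl_of_isResolving (hW : IsResolving G W) : InjOn s Wᶜ := by
  intro x hx y hy hxy
  by_contra hne
  obtain ⟨w, -, hsep⟩ := hG.isResolving_iff.1 hW x hx y hy hne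
  exact hsep (by rw [hxy])

lemma isResolving_of_injOn (hinj : InjOn s Wᶜ) (hcover : ∀ k, ∃ w ∈ W, s w = {k}) :
    IsResolving G W := by
  refine hG.isResolving_iff.2 fun x hx y hy hxy => ?_
  obtain ⟨k, hk⟩ : ∃ k, ¬ (k ∈ s x ↔ k ∈ s y) := by
    by_contra! h
    exact hxy (hinj hx hy (Set.ext h))
  obtain ⟨w, hw, hsw⟩ := hcover k
  exact ⟨w, hw, by simpa [hsw, disjoint_singleton_left, not_iff_not] using hk⟩

lemma exists_separating (hW : IsResolving G W) {u v : Set κ} (huv : u ≠ v)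
    (hu : ¬ s ⁻¹' {u} ⊆ W) (hv : ¬ s ⁻¹' {v} ⊆ W) :
    ∃ w ∈ W, ¬ (Disjoint (s w) u ↔ Disjoint (s w) v) := by
  obtain ⟨x, rfl, hx⟩ := not_subset.1 hu
  obtain ⟨y, rfl, hy⟩ := not_subset.1 hv
  exact hG.isResolving_iff.1 hW x hx y hy (fun h => huv (congrArg s h))

lemma preimage_singleton_subset_of_disjoint {k : κ} (hsub : (s ⁻¹' {{k}}).Subsingleton)
    {w : V} (hw : w ∈ W) (hdisj : Disjoint (s w) {k}ᶜ) : s ⁻¹' {{k}} ⊆ W := by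
  have hsw : s w = {k} :=
    (hG.nonempty w).subset_singleton_iff.1 (disjoint_compl_right_iff_subset.1 hdisj)
  intro x hx
  rwa [hsub hx hsw]

end Resolving

section Sum

variable {V ι ι' : Type*} {G : SimpleGraph V} {s : V → Set (ι ⊕ ι')}
  (hG : G.IsIntersectionGraph s) {W : Set V}
include hG

lemma preimage_univ_subset_or (hW : IsResolving G W) {i : ι}
    (hsub : (s ⁻¹' {{.inl i}}).Subsingleton) (hi : ¬ s ⁻¹' {{.inl i}ᶜ} ⊆ W) :
    s ⁻¹' {univ} ⊆ W ∨ s ⁻¹' {{.inl i}} ⊆ W := by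
  by_contra! h
  obtain ⟨w, hw, hsep⟩ := hG.exists_separating hW (by simp [Set.ext_iff]) h.1 hi
  have hdisj : Disjoint (s w) {.inl i}ᶜ := by
    simpa [(hG.nonempty w).ne_empty] using hsep
  exact h.2 (hG.preimage_singleton_subset_of_disjoint hsub hw hdisj)

lemma preimage_singleton_subset_or (hW : IsResolving G W) {i i' : ι} (hii' : i ≠ i')
    (hsub : ∀ i, (s ⁻¹' {{.inl i}}).Subsingleton) (hi : ¬ s ⁻¹' {{.inl i}ᶜ} ⊆ W)
    (hi' : ¬ s ⁻¹' {{.inl i'}ᶜ} ⊆ W) :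
    s ⁻¹' {{.inl i}} ⊆ W ∨ s ⁻¹' {{.inl i'}} ⊆ W := by
  obtain ⟨w, hw, hsep⟩ := hG.exists_separating hW (by simpa using hii') hi hi'
  have hdisj : Disjoint (s w) {.inl i}ᶜ ∨ Disjoint (s w) {.inl i'}ᶜ := by tauto
  exact hdisj.imp (hG.preimage_singleton_subset_of_disjoint (hsub i) hw)
    (hG.preimage_singleton_subset_of_disjoint (hsub i') hw)

lemma card_add_one_le_ncard [Fintype ι] [Finite ι'] [Nonempty ι'] (hW : IsResolving G W)
    (hsub : ∀ i, (s ⁻¹' {{.inl i}}).Subsingleton) :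
    Fintype.card ι + 1 ≤ {u | s ⁻¹' {u} ⊆ W}.ncard := by
  classical
  set g : ι → Set (ι ⊕ ι') := fun i =>
    if s ⁻¹' {{.inl i}ᶜ} ⊆ W then {.inl i}ᶜ else if s ⁻¹' {{.inl i}} ⊆ W then {.inl i} else univ
  have hg : ∀ i, s ⁻¹' {g i} ⊆ W := by
    intro i
    simp only [g]
    split_ifs with h₁ h₂
    · exact h₁
    · exact h₂
    · exact (hG.preimage_univ_subset_or hW (hsub i) h₁).resolve_right h₂
  have hg_inj : Injective g := by
    intro i i' h
    by_contra hii'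
    simp only [g] at h
    split_ifs at h <;> simp [Set.ext_iff] at h <;> try exact hii' h
    rename_i hi _ hi' _
    rcases hG.preimage_singleton_subset_or hW hii' hsub hi hi' with h' | h' <;> contradiction
  have hne : ∀ i, g i ≠ ∅ := by
    intro i
    simp only [g]
    split_ifs <;> simp [Set.ext_iff]
  have hempty : s ⁻¹' {∅} ⊆ W := fun x hx => absurd hx (hG.nonempty x).ne_empty
  calc Fintype.card ι + 1 = (insert ∅ (range g)).ncard := by
        rw [ncard_insert_of_notMem (by simpa [eq_comm] using hne), ncard_range_of_injective hg_inj,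
          Nat.card_eq_fintype_card]
    _ ≤ {u | s ⁻¹' {u} ⊆ W}.ncard :=
        ncard_le_ncard (insert_subset hempty (range_subset_iff.2 hg)) (toFinite _)

variable [Fintype ι] [Fintype ι']

lemma ncard_compl_add_le [Nonempty ι'] (hW : IsResolving G W)
    (hsub : ∀ i, (s ⁻¹' {{.inl i}}).Subsingleton) :
    Wᶜ.ncard + Fintype.card ι + 1 ≤ 2 ^ Fintype.card (ι ⊕ ι') := by
  have himage : s '' Wᶜ ⊆ {u | s ⁻¹' {u} ⊆ W}ᶜ := by
    rintro _ ⟨x, hx, rfl⟩ hfull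
    exact hx (hfull rfl)
  have h₁ := (hG.injOn_compl_of_isResolving hW).ncard_image
  have h₂ := ncard_le_ncard himage
  have h₃ := hG.card_add_one_le_ncard hW hsub
  have h₄ := ncard_add_ncard_compl_eq_two_pow {u | s ⁻¹' {u} ⊆ W}
  omega

lemma exists_isResolving_ncard_compl_add_eq
    (hsurj : ∀ u : Set (ι ⊕ ι'), u.Nonempty → ∃ x, s x = u)
    (htwo : ∀ j, ∃ x y, x ≠ y ∧ s x = {.inr j} ∧ s y = {.inr j}) :
    ∃ W, IsResolving G W ∧ Wᶜ.ncard + Fintype.card ι + 1 = 2 ^ Fintype.card (ι ⊕ ι') := by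
  set T : Set (Set (ι ⊕ ι')) := insert ∅ (range fun i => {.inl i})
  have hsT : s '' (s ⁻¹' Tᶜ) = Tᶜ := by
    refine image_preimage_eq_of_subset fun u hu => hsurj u ?_
    exact nonempty_iff_ne_empty.2 fun h => hu (by simp [T, h])
  obtain ⟨D, hD, hinj⟩ := exists_image_eq_and_injOn (s ⁻¹' Tᶜ) s
  rw [hsT] at hD
  refine ⟨Dᶜ, hG.isResolving_of_injOn (by rwa [compl_compl]) ?_, ?_⟩
  · rintro (i | j)
    · obtain ⟨x, hx⟩ := hsurj {.inl i} (singleton_nonempty _)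
      refine ⟨x, fun hxD => ?_, hx⟩
      have : s x ∈ Tᶜ := hD ▸ mem_image_of_mem s hxD
      exact this (by simp [T, hx])
    · obtain ⟨x, y, hxy, hx, hy⟩ := htwo j
      by_cases hxD : x ∈ D
      · exact ⟨y, fun hyD => hxy (hinj hxD hyD (hx.trans hy.symm)), hy⟩
      · exact ⟨x, hxD, hx⟩
  · have hT : T.ncard = Fintype.card ι + 1 := by
      rw [ncard_insert_of_notMem (by simp [eq_comm]),
        ncard_range_of_injective (fun i i' h => by simpa using h), Nat.card_eq_fintype_card]
    rw [compl_compl, ← hinj.ncard_image, hD, add_assoc, ← hT, add_comm,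
      ncard_add_ncard_compl_eq_two_pow]

theorem metricDim_add_two_pow [Finite V] [Nonempty ι']
    (hsub : ∀ i, (s ⁻¹' {{.inl i}}).Subsingleton)
    (hsurj : ∀ u : Set (ι ⊕ ι'), u.Nonempty → ∃ x, s x = u)
    (htwo : ∀ j, ∃ x y, x ≠ y ∧ s x = {.inr j} ∧ s y = {.inr j}) :
    metricDim G + 2 ^ Fintype.card (ι ⊕ ι') = Nat.card V + Fintype.card ι + 1 := by
  obtain ⟨W, hW, hcard⟩ := hG.exists_isResolving_ncard_compl_add_eq hsurj htwo
  have hdim := metricDim_add_ncard_compl hW fun W' hW' => by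
    have := hG.ncard_compl_add_le hW' hsub
    omega
  omega

end Sum

end IsIntersectionGraph

end SimpleGraph

lemma not_isZD_one {R : Type*} [CommSemiring R] : ¬ IsZD (1 : R) :=
  fun ⟨_, hy, h⟩ => hy (by simpa using h)

lemma Prod.isZD_iff {R R' : Type*} [CommSemiring R] [CommSemiring R'] {x : R × R'} :
    IsZD x ↔ IsZD x.1 ∨ IsZD x.2 := by
  constructor
  · rintro ⟨y, hy, h⟩
    by_cases hy₁ : y.1 = 0
    · exact .inr ⟨y.2, fun h₂ => hy (Prod.ext hy₁ h₂), congrArg Prod.snd h⟩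
    · exact .inl ⟨y.1, hy₁, congrArg Prod.fst h⟩
  · rintro (⟨y, hy, h⟩ | ⟨y, hy, h⟩)
    · exact ⟨(y, 0), by simpa using hy, Prod.ext h (mul_zero _)⟩
    · exact ⟨(0, y), by simpa using hy, Prod.ext (mul_zero _) h⟩

lemma exists_ne_and_ne_and_ne_of_three_le_natCard {α : Type*} [Finite α] (c : α)
    (h : 3 ≤ Nat.card α) : ∃ a b : α, a ≠ b ∧ a ≠ c ∧ b ≠ c := by
  have hcompl := ncard_add_ncard_compl ({c} : Set α)
  rw [ncard_singleton] at hcompl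
  obtain ⟨a, b, ha, hb, hab⟩ := (one_lt_ncard_iff).1 (by omega : 1 < ({c}ᶜ : Set α).ncard)
  exact ⟨a, b, hab, ha, hb⟩

lemma eq_zero_or_eq_one_of_ringEquiv_bb {R : Type*} [CommSemiring R] (e : R ≃+* BB) (a : R) :
    a = 0 ∨ a = 1 := by
  have : ∀ b : BB, b = 0 ∨ b = 1 := by decide
  exact (this (e a)).imp (fun h => e.injective (by simpa using h))
    (fun h => e.injective (by simpa using h))

/-- The factors for which `Γ₁` of a product is the intersection graph of the sets of coordinates
different from `1`. -/
structure SoleRegularOne (R : Type*) [CommSemiring R] : Prop where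
  isZD_of_ne_one : ∀ a : R, a ≠ 1 → IsZD a
  add_eq_one_iff : ∀ a b : R, a + b = 1 ↔ a = 1 ∨ b = 1
  zero_ne_one : (0 : R) ≠ 1

namespace SoleRegularOne

variable {R : Type*} [CommSemiring R]

lemma of_antinegative (anti : ∀ a b : R, a + b = 0 → a = 0 ∧ b = 0)
    (closed : ∀ a b : R, IsZD a → IsZD b → IsZD (a + b))
    (hreg : {x : R | ¬ IsZD x}.ncard = 1) (h01 : (0 : R) ≠ 1) : SoleRegularOne R := by
  have hzd : ∀ a : R, a ≠ 1 → IsZD a := by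
    obtain ⟨c, hc⟩ := ncard_eq_one.1 hreg
    have h₁ : (1 : R) ∈ ({c} : Set R) := hc ▸ not_isZD_one
    intro a ha
    by_contra ha'
    have h₂ : a ∈ ({c} : Set R) := hc ▸ ha'
    exact ha (h₂.trans h₁.symm)
  have one_add : ∀ c : R, 1 + c = 1 := by
    intro c
    by_contra h
    obtain ⟨y, hy, hmul⟩ := hzd _ h
    rw [add_mul, one_mul] at hmul
    exact hy (anti _ _ hmul).1
  refine ⟨hzd, fun a b => ⟨fun h => ?_, ?_⟩, h01⟩
  · by_contra! hab
    exact not_isZD_one (h ▸ closed a b (hzd a hab.1) (hzd b hab.2))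
  · rintro (rfl | rfl)
    · exact one_add b
    · rw [add_comm, one_add]

lemma of_ringEquiv_bb (e : R ≃+* BB) : SoleRegularOne R := by
  have h₀₁ : (0 : R) ≠ 1 := fun h => by simpa using congrArg e h
  have h₁₁ : (1 : R) + 1 = 1 := e.injective (by simp; decide)
  refine ⟨fun a ha => ⟨1, h₀₁.symm, ?_⟩, fun a b => ?_, h₀₁⟩
  · rw [(eq_zero_or_eq_one_of_ringEquiv_bb e a).resolve_right ha, zero_mul]
  · rcases eq_zero_or_eq_one_of_ringEquiv_bb e a with rfl | rfl <;>
      rcases eq_zero_or_eq_one_of_ringEquiv_bb e b with rfl | rfl <;> simp [h₀₁, h₁₁]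

end SoleRegularOne

lemma Pi.isZD_iff_ne_one {κ : Type*} {R : κ → Type*} [∀ k, CommSemiring (R k)]
    (hR : ∀ k, SoleRegularOne (R k)) {x : ∀ k, R k} : IsZD x ↔ x ≠ 1 := by
  classical
  refine ⟨fun hx h => not_isZD_one (h ▸ hx), fun hx => ?_⟩
  obtain ⟨k, hk⟩ := ne_iff.1 hx
  obtain ⟨y, hy, hxy⟩ := (hR k).isZD_of_ne_one (x k) hk
  refine ⟨single k y, by simpa using hy, ?_⟩
  ext k'
  rcases eq_or_ne k' k with rfl | h <;> simp [*]

section NonOneCoords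

variable {ι ι' : Type*} {B : ι → Type*} {Z : ι' → Type*}
  [∀ i, CommSemiring (B i)] [∀ j, CommSemiring (Z j)]

def nonOneCoords (x : (∀ i, B i) × (∀ j, Z j)) : Set (ι ⊕ ι') :=
  {k | k.elim (fun i => x.1 i ≠ 1) (fun j => x.2 j ≠ 1)}

@[simp]
lemma inl_mem_nonOneCoords {x : (∀ i, B i) × (∀ j, Z j)} {i : ι} :
    .inl i ∈ nonOneCoords x ↔ x.1 i ≠ 1 := Iff.rfl

@[simp]
lemma inr_mem_nonOneCoords {x : (∀ i, B i) × (∀ j, Z j)} {j : ι'} :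
    .inr j ∈ nonOneCoords x ↔ x.2 j ≠ 1 := Iff.rfl

lemma nonOneCoords_nonempty_iff {x : (∀ i, B i) × (∀ j, Z j)} :
    (nonOneCoords x).Nonempty ↔ x ≠ 1 := by
  simp [Set.Nonempty, Sum.exists, Prod.ext_iff, funext_iff, or_iff_not_imp_left]

lemma subsingleton_setOf_nonOneCoords_eq_inl {i : ι}
    (hi : ∀ a b : B i, a ≠ 1 → b ≠ 1 → a = b) :
    {x : (∀ i, B i) × (∀ j, Z j) | nonOneCoords x = {.inl i}}.Subsingleton := by
  intro x hx y hy
  simp only [Set.ext_iff, Sum.forall, inl_mem_nonOneCoords, inr_mem_nonOneCoords,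
    Set.mem_singleton_iff, Sum.inl.injEq, reduceCtorEq, iff_false, not_not] at hx hy
  refine Prod.ext (funext fun i' => ?_) (funext fun j => (hx.2 j).trans (hy.2 j).symm)
  rcases eq_or_ne i' i with rfl | h
  · exact hi _ _ ((hx.1 _).2 rfl) ((hy.1 _).2 rfl)
  · rw [not_not.1 (mt (hx.1 i').1 h), not_not.1 (mt (hy.1 i').1 h)]

lemma nonOneCoords_one_mulSingle [DecidableEq ι'] {j : ι'} {a : Z j} (ha : a ≠ 1) :
    nonOneCoords ((1, Pi.mulSingle j a) : (∀ i, B i) × (∀ j, Z j)) = {.inr j} := by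
  ext (i | j')
  · simp
  · rcases eq_or_ne j' j with rfl | h <;> simp [*]

variable (hB : ∀ i, SoleRegularOne (B i)) (hZ : ∀ j, SoleRegularOne (Z j))
include hB hZ

lemma isZD_iff_ne_one_prod {x : (∀ i, B i) × (∀ j, Z j)} : IsZD x ↔ x ≠ 1 := by
  rw [Prod.isZD_iff, Pi.isZD_iff_ne_one hB, Pi.isZD_iff_ne_one hZ, ← not_and_or,
    ← Prod.mk_eq_one]

lemma natCard_isZD_add_one_prod [Finite ((∀ i, B i) × (∀ j, Z j))] :
    Nat.card {x : (∀ i, B i) × (∀ j, Z j) // IsZD x} + 1 =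
      Nat.card ((∀ i, B i) × (∀ j, Z j)) := by
  have hset : {x : (∀ i, B i) × (∀ j, Z j) | IsZD x} = {1}ᶜ :=
    Set.ext fun _ => isZD_iff_ne_one_prod hB hZ
  have hcompl := ncard_add_ncard_compl ({1} : Set ((∀ i, B i) × (∀ j, Z j)))
  rw [ncard_singleton, ← hset, ← Nat.card_coe_set_eq, add_comm] at hcompl
  exact hcompl

lemma add_eq_one_iff_disjoint_nonOneCoords {x y : (∀ i, B i) × (∀ j, Z j)} :
    x + y = 1 ↔ Disjoint (nonOneCoords x) (nonOneCoords y) := by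
  simp [Prod.ext_iff, funext_iff, Set.disjoint_left, Sum.forall, (hB _).add_eq_one_iff,
    (hZ _).add_eq_one_iff, or_iff_not_imp_left]

lemma exists_nonOneCoords_eq (u : Set (ι ⊕ ι')) :
    ∃ x : (∀ i, B i) × (∀ j, Z j), nonOneCoords x = u := by
  classical
  refine ⟨(fun i => if .inl i ∈ u then 0 else 1, fun j => if .inr j ∈ u then 0 else 1), ?_⟩
  ext (i | j)
  · by_cases h : .inl i ∈ u <;> simp [h, (hB i).zero_ne_one]
  · by_cases h : .inr j ∈ u <;> simp [h, (hZ j).zero_ne_one]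

lemma isIntersectionGraph_gamma1 [Nonempty (ι ⊕ ι')] :
    (gamma1 ((∀ i, B i) × (∀ j, Z j))).IsIntersectionGraph fun v => nonOneCoords v.val where
  adj_iff v w := by
    change (v : (∀ i, B i) × (∀ j, Z j)) ≠ w ∧ IsZD ((v : (∀ i, B i) × (∀ j, Z j)) + w) ↔ _
    simp only [Subtype.val_injective.ne_iff, isZD_iff_ne_one_prod hB hZ, ne_eq,
      add_eq_one_iff_disjoint_nonOneCoords hB hZ]
  nonempty v := nonOneCoords_nonempty_iff.2 ((isZD_iff_ne_one_prod hB hZ).1 v.2)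
  exists_eq_univ := by
    obtain ⟨x, hx⟩ := exists_nonOneCoords_eq hB hZ univ
    refine ⟨⟨x, (isZD_iff_ne_one_prod hB hZ).2 ?_⟩, hx⟩
    exact nonOneCoords_nonempty_iff.1 (hx ▸ univ_nonempty)

theorem metricDim_gamma1_add_two_pow [Fintype ι] [Fintype ι'] [Nonempty ι']
    [Finite ((∀ i, B i) × (∀ j, Z j))]
    (hbool : ∀ i (a b : B i), a ≠ 1 → b ≠ 1 → a = b)
    (htwo : ∀ j, ∃ a b : Z j, a ≠ b ∧ a ≠ 1 ∧ b ≠ 1) :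
    metricDim (gamma1 ((∀ i, B i) × (∀ j, Z j))) + 2 ^ Fintype.card (ι ⊕ ι') =
      Nat.card {x : (∀ i, B i) × (∀ j, Z j) // IsZD x} + Fintype.card ι + 1 := by
  classical
  have vertex {x : (∀ i, B i) × (∀ j, Z j)} (hx : x ≠ 1) : IsZD x :=
    (isZD_iff_ne_one_prod hB hZ).2 hx
  refine (isIntersectionGraph_gamma1 hB hZ).metricDim_add_two_pow
    (fun i => (subsingleton_setOf_nonOneCoords_eq_inl (hbool i)).preimage Subtype.val_injective)
    (fun u hu => ?_) (fun j => ?_)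
  · obtain ⟨x, rfl⟩ := exists_nonOneCoords_eq hB hZ u
    exact ⟨⟨x, vertex (nonOneCoords_nonempty_iff.1 hu)⟩, rfl⟩
  · obtain ⟨a, b, hab, ha, hb⟩ := htwo j
    have hvertex {c : Z j} (hc : c ≠ 1) :
        IsZD ((1, Pi.mulSingle j c) : (∀ i, B i) × (∀ j, Z j)) :=
      vertex (nonOneCoords_nonempty_iff.1 (by simp [nonOneCoords_one_mulSingle hc]))
    refine ⟨⟨_, hvertex ha⟩, ⟨_, hvertex hb⟩, fun h => hab ?_, nonOneCoords_one_mulSingle ha,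
      nonOneCoords_one_mulSingle hb⟩
    exact Pi.mulSingle_injective j (congrArg (fun v => v.val.2) h)

end NonOneCoords

theorem stmt15_general (m n : ℕ) (hn : 1 ≤ n)
    {B : Fin m → Type*} [∀ i, CommSemiring (B i)]
    (hB : ∀ i, Nonempty (B i ≃+* BB))
    {Z : Fin n → Type*} [∀ j, CommSemiring (Z j)] [∀ j, Fintype (Z j)]
    (antiZ : ∀ j, ∀ a b : Z j, a + b = 0 → a = 0 ∧ b = 0)
    (closedZ : ∀ j, ∀ a b : Z j, IsZD a → IsZD b → IsZD (a + b))
    (hcardZ : ∀ j, 3 ≤ Nat.card (Z j))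
    (hnzZ : ∀ j, Set.ncard {x : Z j | ¬ IsZD x} = 1) :
    (metricDim (gamma1 ((∀ i, B i) × (∀ j, Z j))) : ℤ) =
        (Nat.card ((∀ i, B i) × (∀ j, Z j)) : ℤ) + m - 2 ^ (m + n) ∧
      (metricDim (gamma1 ((∀ i, B i) × (∀ j, Z j))) : ℤ) =
        (Nat.card {x : (∀ i, B i) × (∀ j, Z j) // IsZD x} : ℤ) - 2 ^ (m + n) + m + 1 := by
  have : ∀ i, Finite (B i) := fun i => .of_equiv _ (hB i).some.toEquiv.symm
  have : Nonempty (Fin n) := ⟨⟨0, hn⟩⟩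
  have hB' i := SoleRegularOne.of_ringEquiv_bb (hB i).some
  have hZ j : SoleRegularOne (Z j) := by
    have : Nontrivial (Z j) := Finite.one_lt_card_iff_nontrivial.1 (by linarith [hcardZ j])
    exact .of_antinegative (antiZ j) (closedZ j) (hnzZ j) zero_ne_one
  have hbool i (a b : B i) (ha : a ≠ 1) (hb : b ≠ 1) : a = b := by
    rw [(eq_zero_or_eq_one_of_ringEquiv_bb (hB i).some a).resolve_right ha,
      (eq_zero_or_eq_one_of_ringEquiv_bb (hB i).some b).resolve_right hb]
  have hdim := metricDim_gamma1_add_two_pow hB' hZ hbool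
    fun j => exists_ne_and_ne_and_ne_of_three_le_natCard 1 (hcardZ j)
  have hcard := natCard_isZD_add_one_prod hB' hZ
  simp only [Fintype.card_sum, Fintype.card_fin] at hdim
  zify at hdim hcard
  constructor <;> linarith

theorem stmt15 (m n : ℕ) (hm : 1 ≤ m) (hn : 1 ≤ n)
    {B : Fin m → Type*} [∀ i, CommSemiring (B i)]
    (hB : ∀ i, Nonempty (B i ≃+* BB))
    {Z : Fin n → Type*} [∀ j, CommSemiring (Z j)] [∀ j, Fintype (Z j)]
    (antiZ : ∀ j, ∀ a b : Z j, a + b = 0 → a = 0 ∧ b = 0)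
    (closedZ : ∀ j, ∀ a b : Z j, IsZD a → IsZD b → IsZD (a + b))
    (hcardZ : ∀ j, 3 ≤ Nat.card (Z j))
    (hnzZ : ∀ j, Set.ncard {x : Z j | ¬ IsZD x} = 1) :
    (metricDim (gamma1 ((∀ i, B i) × (∀ j, Z j))) : ℤ) =
        (Nat.card ((∀ i, B i) × (∀ j, Z j)) : ℤ) + m - 2 ^ (m + n) ∧
      (metricDim (gamma1 ((∀ i, B i) × (∀ j, Z j))) : ℤ) =
        (Nat.card {x : (∀ i, B i) × (∀ j, Z j) // IsZD x} : ℤ) - 2 ^ (m + n) + m + 1 :=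
  stmt15_general m n hn hB antiZ closedZ hcardZ hnzZ
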